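/- Let c, s ∈ ℝ^N and let ψ = (1/2)·atan2(2⟪c, s⟫, ‖c‖² − ‖s‖²). Define a = cos(ψ)•c + sin(ψ)•s and b = −sin(ψ)•c + cos(ψ)•s. Then ⟪a, b⟫ = 0 and ‖a‖ ≥ ‖b‖; i.e., the rotation with ψ chosen via the two-argument arctangent always yields orthogonal axes with a the major axis. -/

import Mathlib

/-!
With `z = (‖c‖² - ‖s‖²) + 2⟪c, s⟫ i`, rotating the pair `(c, s)` by `ψ` gives
`2⟪a, b⟫ = Im z · cos 2ψ - Re z · sin 2ψ` and `‖a‖² - ‖b‖² = Re z · cos 2ψ + Im z · sin 2ψ`.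
For `2ψ = arg z` these are the imaginary and real parts of `z · e^{-i arg z} = ‖z‖`,
namely `0` and `‖z‖ ≥ 0`.
-/

open RealInnerProductSpace Real

namespace Complex

theorem re_mul_sin_arg_eq_im_mul_cos_arg (z : ℂ) :
    z.re * Real.sin (arg z) = z.im * Real.cos (arg z) := by
  rw [← norm_mul_cos_arg, ← norm_mul_sin_arg]
  ring

theorem re_mul_cos_arg_add_im_mul_sin_arg (z : ℂ) :
    z.re * Real.cos (arg z) + z.im * Real.sin (arg z) = ‖z‖ := by
  rw [← norm_mul_cos_arg, ← norm_mul_sin_arg]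
  linear_combination ‖z‖ * Real.sin_sq_add_cos_sq (arg z)

end Complex

section Rotation

variable {E : Type*} [NormedAddCommGroup E] [InnerProductSpace ℝ E] (c s : E) (ψ : ℝ)

theorem two_mul_inner_rotate :
    2 * ⟪cos ψ • c + sin ψ • s, -sin ψ • c + cos ψ • s⟫ =
      2 * ⟪c, s⟫ * cos (2 * ψ) - (‖c‖ ^ 2 - ‖s‖ ^ 2) * sin (2 * ψ) := by
  simp only [inner_add_left, inner_add_right, real_inner_smul_left, real_inner_smul_right,
    real_inner_comm c s, real_inner_self_eq_norm_sq, sin_two_mul, cos_two_mul]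
  linear_combination (-2 * ⟪c, s⟫) * sin_sq_add_cos_sq ψ

theorem norm_sq_sub_norm_sq_rotate :
    ‖cos ψ • c + sin ψ • s‖ ^ 2 - ‖-sin ψ • c + cos ψ • s‖ ^ 2 =
      (‖c‖ ^ 2 - ‖s‖ ^ 2) * cos (2 * ψ) + 2 * ⟪c, s⟫ * sin (2 * ψ) := by
  simp only [← real_inner_self_eq_norm_sq, inner_add_left, inner_add_right,
    real_inner_smul_left, real_inner_smul_right, real_inner_comm c s, sin_two_mul, cos_two_mul]
  simp only [real_inner_self_eq_norm_sq]
  linear_combination (‖s‖ ^ 2 - ‖c‖ ^ 2) * sin_sq_add_cos_sq ψ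

end Rotation

theorem atan2_phase_gives_major_axis_general (N : ℕ)
    (c s : EuclideanSpace ℝ (Fin N))
    (ψ : ℝ)
    (hψ : ψ = (1/2) * Complex.arg (((‖c‖^2 - ‖s‖^2 : ℝ) : ℂ) + ((2 * ⟪c, s⟫ : ℝ) : ℂ) * Complex.I))
    (a b : EuclideanSpace ℝ (Fin N))
    (ha : a = Real.cos ψ • c + Real.sin ψ • s)
    (hb : b = -Real.sin ψ • c + Real.cos ψ • s) :
    ⟪a, b⟫ = 0 ∧ ‖a‖ ≥ ‖b‖ := by
  set z : ℂ := ((‖c‖^2 - ‖s‖^2 : ℝ) : ℂ) + ((2 * ⟪c, s⟫ : ℝ) : ℂ) * Complex.I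
  have hre : z.re = ‖c‖ ^ 2 - ‖s‖ ^ 2 := by
    simp only [z, Complex.add_re, Complex.ofReal_re, Complex.re_ofReal_mul, Complex.I_re, mul_zero,
      add_zero]
  have him : z.im = 2 * ⟪c, s⟫ := by
    simp only [z, Complex.add_im, Complex.ofReal_im, Complex.im_ofReal_mul, Complex.I_im, mul_one,
      zero_add]
  have h2ψ : 2 * ψ = Complex.arg z := by rw [hψ]; ring
  subst ha hb
  constructor
  · have h := two_mul_inner_rotate c s ψ
    rw [h2ψ, ← hre, ← him, ← z.re_mul_sin_arg_eq_im_mul_cos_arg, sub_self] at h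
    linarith
  · have h := norm_sq_sub_norm_sq_rotate c s ψ
    rw [h2ψ, ← hre, ← him, z.re_mul_cos_arg_add_im_mul_sin_arg] at h
    exact le_of_sq_le_sq (by linarith [norm_nonneg z]) (norm_nonneg _)

theorem atan2_phase_gives_major_axis (N : ℕ) (hN : 0 < N)
    (c s : EuclideanSpace ℝ (Fin N))
    (ψ : ℝ)
    (hψ : ψ = (1/2) * Complex.arg (((‖c‖^2 - ‖s‖^2 : ℝ) : ℂ) + ((2 * ⟪c, s⟫ : ℝ) : ℂ) * Complex.I))
    (a b : EuclideanSpace ℝ (Fin N))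
    (ha : a = Real.cos ψ • c + Real.sin ψ • s)
    (hb : b = -Real.sin ψ • c + Real.cos ψ • s) :
    ⟪a, b⟫ = 0 ∧ ‖a‖ ≥ ‖b‖ :=
  atan2_phase_gives_major_axis_general N c s ψ hψ a b ha hb
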